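/- Let Δ be a finite simple graph with vertex set {a_1,…,a_k}, C a proper coloring of Δ, and (Γ, γ_1,…,γ_k) a Δ-halo for C. If a_i and a_j are adjacent in Δ (so that γ_i and γ_j are vertex-disjoint cycles in Γ), then the elements w_i and w_j of G(Δ_Γ) commute, where w_l denotes the product, in traversal order, of the generators of G(Δ_Γ) corresponding to the successive edges of the cycle γ_l. Consequently, the assignment a_i ↦ w_i² extends to a group homomorphism Ψ : G(Δ) → G(Δ_Γ). -/

import Mathlib

def raagRels {V : Type*} (G : SimpleGraph V) : Set (FreeGroup V) :=
  {r | ∃ a b : V, G.Adj a b ∧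
    r = FreeGroup.of a * FreeGroup.of b * (FreeGroup.of a)⁻¹ * (FreeGroup.of b)⁻¹}

abbrev RAAG {V : Type*} (G : SimpleGraph V) : Type _ :=
  PresentedGroup (raagRels G)

def raagGen {V : Type*} (G : SimpleGraph V) (v : V) : RAAG G :=
  PresentedGroup.of v

def opLineGraph {W : Type*} (Γ : SimpleGraph W) : SimpleGraph Γ.edgeSet where
  Adj e f := (e : Sym2 W) ≠ (f : Sym2 W) ∧ ∀ v : W, v ∈ (e : Sym2 W) → v ∉ (f : Sym2 W)
  symm := by
    constructor
    rintro e f ⟨hne, h⟩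
    exact ⟨hne.symm, fun v hv hv' => h v hv' hv⟩
  loopless := by
    constructor
    rintro e ⟨hne, -⟩
    exact hne rfl

def walkWord {W : Type*} {Γ : SimpleGraph W} {u v : W} (p : Γ.Walk u v) :
    RAAG (opLineGraph Γ) :=
  (p.darts.map fun d => raagGen (opLineGraph Γ) ⟨d.edge, d.edge_mem⟩).prod

structure IsHalo {k n : ℕ} (Δ : SimpleGraph (Fin k)) (C : SimpleGraph.Coloring Δ (Fin n))
    {W : Type*} (Γ : SimpleGraph W) (base : Fin k → W)
    (γ : ∀ i : Fin k, Γ.Walk (base i) (base i)) (x : Fin n → W) : Prop where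
  finite : Finite W
  connected : Γ.Connected
  isCycle : ∀ i : Fin k, (γ i).IsCycle
  color_mem : ∀ (c : Fin n) (i : Fin k), x c ∈ (γ i).support ↔ C i = c
  nonadj_unique : ∀ i j : Fin k, i ≠ j → ¬ Δ.Adj i j →
    ∃! v : W, v ∈ (γ i).support ∧ v ∈ (γ j).support
  nonadj_same_color : ∀ i j : Fin k, i ≠ j → ¬ Δ.Adj i j → C i = C j →
    ∀ v : W, v ∈ (γ i).support → v ∈ (γ j).support → v = x (C i)
  nonadj_diff_color : ∀ i j : Fin k, i ≠ j → ¬ Δ.Adj i j → C i ≠ C j →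
    ∀ v : W, v ∈ (γ i).support → v ∈ (γ j).support →
      ∀ l : Fin k, l ≠ i → l ≠ j → v ∉ (γ l).support
  adj_disjoint : ∀ i j : Fin k, Δ.Adj i j → ∀ v : W, v ∈ (γ i).support → v ∉ (γ j).support

/-! Edges of disjoint subgraphs span a clique in `Δ_Γ`, so their generators pairwise commute;
hence the edge-words of vertex-disjoint cycles commute, and so do their squares, which is
exactly the relation needed to define `Ψ` on the presentation of `G(Δ)`. -/

namespace RAAG

variable {V : Type*} (G : SimpleGraph V)

theorem commute_raagGen_of_adj {a b : V} (h : G.Adj a b) :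
    Commute (raagGen G a) (raagGen G b) := by
  have hrel : raagGen G a * raagGen G b * (raagGen G a)⁻¹ * (raagGen G b)⁻¹ = 1 :=
    PresentedGroup.one_of_mem ⟨a, b, h, rfl⟩
  rwa [mul_inv_eq_one, mul_inv_eq_iff_eq_mul] at hrel

def lift {H : Type*} [Group H] (f : V → H)
    (hf : ∀ a b, G.Adj a b → Commute (f a) (f b)) : RAAG G →* H :=
  PresentedGroup.toGroup (rels := raagRels G) (f := f) <| by
    rintro r ⟨a, b, hab, rfl⟩
    simp only [map_mul, map_inv, FreeGroup.lift_apply_of]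
    rw [mul_inv_eq_one, mul_inv_eq_iff_eq_mul]
    exact hf a b hab

theorem lift_raagGen {H : Type*} [Group H] (f : V → H)
    (hf : ∀ a b, G.Adj a b → Commute (f a) (f b)) (v : V) :
    lift G f hf (raagGen G v) = f v :=
  PresentedGroup.toGroup.of _

end RAAG

namespace SimpleGraph

variable {W : Type*} {Γ : SimpleGraph W}

theorem opLineGraph_adj_of_disjoint {e f : Γ.edgeSet}
    (h : ∀ v ∈ (e : Sym2 W), v ∉ (f : Sym2 W)) : (opLineGraph Γ).Adj e f := by
  refine ⟨fun hef => ?_, h⟩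
  have ha := Sym2.out_fst_mem (e : Sym2 W)
  exact h _ ha (hef ▸ ha)

theorem Walk.commute_walkWord_of_disjoint {u v u' v' : W} (p : Γ.Walk u v)
    (q : Γ.Walk u' v') (hpq : p.support.Disjoint q.support) :
    Commute (walkWord p) (walkWord q) := by
  refine Commute.list_prod_left _ _ fun a ha => Commute.list_prod_right _ _ fun b hb => ?_
  obtain ⟨d, hd, rfl⟩ := List.mem_map.1 ha
  obtain ⟨d', hd', rfl⟩ := List.mem_map.1 hb
  refine RAAG.commute_raagGen_of_adj _ (opLineGraph_adj_of_disjoint fun w hw hw' => ?_)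
  exact hpq (p.mem_support_of_mem_edges (List.mem_map_of_mem hd) hw)
    (q.mem_support_of_mem_edges (List.mem_map_of_mem hd') hw')

end SimpleGraph

/-- In a `Δ`-halo, if `a i` and `a j` are adjacent in `Δ` then the
edge-words `w i` and `w j` of the (vertex-disjoint) cycles `γ i` and `γ j` commute in
`G(Δ_Γ)`; consequently `a i ↦ (w i)²` extends to a homomorphism `Ψ : G(Δ) → G(Δ_Γ)`. -/
theorem halo_words_commute_and_hom {k n : ℕ} (Δ : SimpleGraph (Fin k))
    (C : SimpleGraph.Coloring Δ (Fin n)) {W : Type*} (Γ : SimpleGraph W)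
    (base : Fin k → W) (γ : ∀ i : Fin k, Γ.Walk (base i) (base i)) (x : Fin n → W)
    (h : IsHalo Δ C Γ base γ x) :
    (∀ i j : Fin k, Δ.Adj i j → Commute (walkWord (γ i)) (walkWord (γ j))) ∧
    ∃ Ψ : RAAG Δ →* RAAG (opLineGraph Γ),
      ∀ i : Fin k, Ψ (raagGen Δ i) = (walkWord (γ i)) ^ 2 := by
  have hcomm : ∀ i j : Fin k, Δ.Adj i j → Commute (walkWord (γ i)) (walkWord (γ j)) :=
    fun i j hij => (γ i).commute_walkWord_of_disjoint (γ j) (h.adj_disjoint i j hij)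
  exact ⟨hcomm, RAAG.lift Δ (fun i => walkWord (γ i) ^ 2)
    (fun i j hij => (hcomm i j hij).pow_pow 2 2), RAAG.lift_raagGen Δ _ _⟩
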